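/- Let F be a probability distribution on ℝ with survival function F̄ = 1 − F, and suppose that (i) F has a density f on the interval [a, ra], where a > 0 and r > 1, and (ii) for some constant A > 0, f(x)/F̄(x) ≥ A/x for all x ∈ [a, ra]. Then ∫_a^{ra} f(x)/x dx ≥ (1 − 1/r)·(A/(1+A))·(F̄(a)/a). -/

import Mathlib

/-!
Write `F̄ = 1 - F`. Since `F` is absolutely continuous on `[a, ra]`, integrating by parts against
`x⁻¹` gives `∫ f/x + ∫ F̄/x² = F̄(a)/a - F̄(ra)/(ra)`, while the hazard bound gives
`A ∫ F̄/x² ≤ ∫ f/x`. As `F̄(ra) ≤ F̄(a)`, this yields `(1 + A) ∫ f/x ≥ A F̄(a) (1/a - 1/(ra))`.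
-/

open MeasureTheory ProbabilityTheory Filter Real Set
open scoped Interval

section Primitive

variable {F f : ℝ → ℝ} {a b : ℝ}

theorem continuousOn_of_sub_eq_intervalIntegral (hf : IntervalIntegrable f volume a b)
    (hF : ∀ x ∈ [[a, b]], F x - F a = ∫ t in a..x, f t) :
    ContinuousOn F [[a, b]] := by
  have hprim : ContinuousOn (fun x ↦ F a + ∫ t in a..x, f t) [[a, b]] :=
    continuousOn_const.add
      (hf.absolutelyContinuousOnInterval_intervalIntegral left_mem_uIcc).continuousOn
  exact hprim.congr fun x hx ↦ by simp only [← hF x hx]; ring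

theorem integral_div_eq_of_sub_eq_intervalIntegral (h0 : (0 : ℝ) ∉ [[a, b]])
    (hf : IntervalIntegrable f volume a b)
    (hF : ∀ x ∈ [[a, b]], F x - F a = ∫ t in a..x, f t) :
    ∫ x in a..b, f x / x = F b / b - F a / a + ∫ x in a..b, F x / x ^ 2 := by
  set Ψ : ℝ → ℝ := fun x ↦ F a + ∫ t in a..x, f t
  have hΨF : EqOn Ψ F [[a, b]] := fun x hx ↦ by simp only [Ψ, ← hF x hx]; ring
  have hΨ : AbsolutelyContinuousOnInterval Ψ a b :=
    contDiffOn_const.absolutelyContinuousOnInterval.add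
      (hf.absolutelyContinuousOnInterval_intervalIntegral left_mem_uIcc)
  have hne : ∀ x ∈ [[a, b]], x ≠ 0 := fun x hx h ↦ h0 (h ▸ hx)
  have hinv : AbsolutelyContinuousOnInterval (·⁻¹) a b :=
    (contDiffOn_id.inv hne).absolutelyContinuousOnInterval
  have hderiv : ∀ᵐ x, x ∈ Ι a b →
      deriv Ψ x * x⁻¹ + Ψ x * deriv (·⁻¹) x = f x / x - F x / x ^ 2 := by
    filter_upwards [hf.ae_hasDerivAt_integral] with x hx hxI
    have hx' := uIoc_subset_uIcc hxI
    rw [((hx hx' a left_mem_uIcc).const_add (F a)).deriv, deriv_inv, hΨF hx']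
    ring
  have hparts := hΨ.integral_deriv_mul_eq_sub hinv
  rw [intervalIntegral.integral_congr_ae hderiv, intervalIntegral.integral_sub,
    hΨF left_mem_uIcc, hΨF right_mem_uIcc] at hparts
  · rw [div_eq_mul_inv, div_eq_mul_inv]
    linarith
  · exact hf.mul_continuousOn (continuousOn_inv₀.mono hne)
  · exact ((continuousOn_of_sub_eq_intervalIntegral hf hF).div (continuousOn_pow 2)
      fun x hx ↦ pow_ne_zero 2 (hne x hx)).intervalIntegrable

theorem integral_div_add_integral_tail_div_sq (h0 : (0 : ℝ) ∉ [[a, b]])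
    (hf : IntervalIntegrable f volume a b)
    (hF : ∀ x ∈ [[a, b]], F x - F a = ∫ t in a..x, f t) :
    (∫ x in a..b, f x / x) + ∫ x in a..b, (1 - F x) / x ^ 2 = (1 - F a) / a - (1 - F b) / b := by
  have hG : ∀ x ∈ [[a, b]], (1 - F x) - (1 - F a) = ∫ t in a..x, (-f) t := fun x hx ↦ by
    rw [Pi.neg_def, intervalIntegral.integral_neg, ← hF x hx]
    ring
  have := integral_div_eq_of_sub_eq_intervalIntegral h0 hf.neg hG
  simp only [Pi.neg_apply, neg_div, intervalIntegral.integral_neg] at this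
  linarith

theorem intervalIntegrable_tail_div_sq (h0 : (0 : ℝ) ∉ [[a, b]])
    (hf : IntervalIntegrable f volume a b)
    (hF : ∀ x ∈ [[a, b]], F x - F a = ∫ t in a..x, f t) :
    IntervalIntegrable (fun x ↦ (1 - F x) / x ^ 2) volume a b :=
  ((continuousOn_const.sub (continuousOn_of_sub_eq_intervalIntegral hf hF)).div
    (continuousOn_pow 2) fun _ hx ↦ pow_ne_zero 2 fun h ↦ h0 (h ▸ hx)).intervalIntegrable

end Primitive

theorem pos_of_div_le_div {A x u v : ℝ} (hA : 0 < A) (hx : 0 < x) (hv : 0 ≤ v)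
    (h : A / x ≤ u / v) : 0 < v :=
  hv.lt_of_ne fun hv0 ↦ (div_pos hA hx).not_ge (by simpa [← hv0] using h)

theorem mul_div_sq_le_div_of_div_le_div {A x u v : ℝ} (hx : 0 < x) (hv : 0 < v)
    (h : A / x ≤ u / v) : A * (v / x ^ 2) ≤ u / x := by
  rw [div_le_div_iff₀ hx hv] at h
  rw [← mul_div_assoc, div_le_div_iff₀ (pow_pos hx 2) hx]
  nlinarith

theorem lemma3_hazard_integral_bound_general
    (F f : ℝ → ℝ) (a r A : ℝ) (ha : 0 < a) (hr : 1 < r) (hA : 0 < A)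
    (hF1 : ∀ x, F x ≤ 1)
    (hf_int : IntervalIntegrable f volume a (r * a))
    (hdens : ∀ x ∈ Set.Icc a (r * a), F x - F a = ∫ t in a..x, f t)
    (hhaz : ∀ x ∈ Set.Icc a (r * a), A / x ≤ f x / (1 - F x)) :
    (1 - 1 / r) * (A / (1 + A)) * ((1 - F a) / a) ≤ ∫ x in a..(r * a), f x / x := by
  set b := r * a
  have hab : a < b := lt_mul_left ha hr
  have hpos : ∀ x ∈ Icc a b, 0 < x := fun x hx ↦ ha.trans_le hx.1
  have h0 : (0 : ℝ) ∉ [[a, b]] := by rw [uIcc_of_le hab.le]; exact fun h ↦ (hpos 0 h).false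
  rw [← uIcc_of_le hab.le] at hdens
  have htail_pos : ∀ x ∈ Icc a b, 0 < 1 - F x := fun x hx ↦
    pos_of_div_le_div hA (hpos x hx) (sub_nonneg.2 (hF1 x)) (hhaz x hx)
  have hf_ge : ∀ x ∈ Icc a b, A * ((1 - F x) / x ^ 2) ≤ f x / x := fun x hx ↦
    mul_div_sq_le_div_of_div_le_div (hpos x hx) (htail_pos x hx) (hhaz x hx)
  have hf_pos : ∀ x ∈ Icc a b, 0 < f x := fun x hx ↦
    (div_pos_iff_of_pos_right (hpos x hx)).1 <|
      (mul_pos hA (div_pos (htail_pos x hx) (pow_pos (hpos x hx) 2))).trans_le (hf_ge x hx)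
  have hFb : F a ≤ F b := sub_nonneg.1 <| hdens b right_mem_uIcc ▸
    intervalIntegral.integral_nonneg hab.le fun x hx ↦ (hf_pos x hx).le
  have hK : A * ∫ x in a..b, (1 - F x) / x ^ 2 ≤ ∫ x in a..b, f x / x := by
    rw [← intervalIntegral.integral_const_mul]
    exact intervalIntegral.integral_mono_on hab.le
      ((intervalIntegrable_tail_div_sq h0 hf_int hdens).const_mul A)
      (hf_int.mul_continuousOn (continuousOn_inv₀.mono fun x hx h ↦ h0 (h ▸ hx))) hf_ge
  have hid := integral_div_add_integral_tail_div_sq h0 hf_int hdens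
  have htail_b : A * ((1 - F b) / b) ≤ A * ((1 - F a) / b) := by gcongr
  calc (1 - 1 / r) * (A / (1 + A)) * ((1 - F a) / a)
      = A * ((1 - F a) / a - (1 - F a) / b) / (1 + A) := by simp only [b]; field_simp
    _ ≤ ∫ x in a..b, f x / x := by
      rw [div_le_iff₀ (by positivity)]
      linear_combination -A * hid + hK + htail_b

/-- **Lemma 3**. Let `F` be a distribution function on `ℝ` with tail `F̄ = 1 − F`, having a
density `f` on the interval `[a, ra]` (`a > 0`, `r > 1`) on which the hazard rate satisfies
`f(x)/F̄(x) ≥ A/x` for some `A > 0`.  Then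
`∫_a^{ra} f(x)/x dx ≥ (1 − 1/r) (A/(1+A)) (F̄(a)/a)`. -/
theorem lemma3_hazard_integral_bound
    (F f : ℝ → ℝ) (a r A : ℝ) (ha : 0 < a) (hr : 1 < r) (hA : 0 < A)
    (hFmono : Monotone F) (hF0 : ∀ x, 0 ≤ F x) (hF1 : ∀ x, F x ≤ 1)
    (hf_int : IntervalIntegrable f volume a (r * a))
    (hdens : ∀ x ∈ Set.Icc a (r * a), F x - F a = ∫ t in a..x, f t)
    (hhaz : ∀ x ∈ Set.Icc a (r * a), A / x ≤ f x / (1 - F x)) :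
    (1 - 1 / r) * (A / (1 + A)) * ((1 - F a) / a) ≤ ∫ x in a..(r * a), f x / x :=
  lemma3_hazard_integral_bound_general F f a r A ha hr hA hF1 hf_int hdens hhaz
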